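/- Let n ≥ 1, ψ ∈ ℂ^{2^n}, and a, b ∈ {0,1}^n. Consider five registers M, A, B, E₁, E₂, each equal to ℂ^{2^n}, initialized in the state ψ_M ⊗ |Φ⁺_n⟩_{AB} ⊗ |Φ⁺_n⟩_{E₁E₂}. Let U_swap be the honest swap-gadget unitary on B ⊗ E₁ ⊗ E₂ given by U_swap = CNOT_{E₂→E₁} ∘ CX_{E₁→B} ∘ (I ⊗ H^{⊗n} ⊗ I) ∘ CZ_{E₁→B} ∘ (I ⊗ H^{⊗n} ⊗ I) with genuine Pauli strings, and let |Φ_{a,b}⟩ = (σ_Z(b)σ_X(a) ⊗ I)|Φ⁺_n⟩. Then (I_B ⊗ σ_Z(b)σ_X(a)_{E₁} ⊗ I_{E₂}) · U_swap · (⟨Φ_{a,b}|_{MA} ⊗ I_{BE₁E₂})(ψ_M ⊗ |Φ⁺_n⟩_{AB} ⊗ |Φ⁺_n⟩_{E₁E₂}) = 2^{−n} · 2^{−n/2} ∑_{c ∈ {0,1}^n} |c⟩_B ⊗ ψ_{E₁} ⊗ |c⟩_{E₂}; that is, up to reordering of tensor factors and normalization 2^{−n}, the extractor ends with |Φ⁺_n⟩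 on (B,E₂) and exactly ψ in its output register E₁. -/
import Mathlib


/-!
**Statement 14** (the extractor of Figure 8, honest case: teleportation
composed with the swap gadget and the Pauli correction outputs exactly `ψ`).

States of several `n`-qubit registers are complex-valued functions of the
corresponding bit strings; the Pauli string `σ_X(a)` acts on a register by
`f(x) ↦ f(x+a)` and `σ_Z(b)` by `f(x) ↦ (−1)^{b·x} f(x)`.
-/

namespace Stmt14

def bdot {n : ℕ} (b c : Fin n → Bool) : ℕ :=
  (Finset.univ.filter fun i => b i ∧ c i).card

def bxor {n : ℕ} (a c : Fin n → Bool) : Fin n → Bool := fun i => xor (a i) (c i)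

def opX {n : ℕ} (a : Fin n → Bool) (f : (Fin n → Bool) → ℂ) : (Fin n → Bool) → ℂ :=
  fun x => f (bxor x a)

def opZ {n : ℕ} (b : Fin n → Bool) (f : (Fin n → Bool) → ℂ) : (Fin n → Bool) → ℂ :=
  fun x => (-1 : ℂ) ^ bdot b x * f x

/-- `|Φ⁺_n⟩ = 2^{−n/2} ∑_a |a⟩ ⊗ |a⟩`. -/
noncomputable def phiPlus (n : ℕ) : (Fin n → Bool) → (Fin n → Bool) → ℂ := fun u v =>
  if u = v then ((Real.sqrt 2 : ℂ)⁻¹) ^ n else 0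

/-- `|Φ_{a,b}⟩ = (σ_Z(b)σ_X(a) ⊗ I)|Φ⁺_n⟩`. -/
noncomputable def phiBell {n : ℕ} (a b : Fin n → Bool) :
    (Fin n → Bool) → (Fin n → Bool) → ℂ := fun u v =>
  opZ b (opX a fun w => phiPlus n w v) u

/-- States of the three registers `B, E₁, E₂`. -/
abbrev St (n : ℕ) := (Fin n → Bool) → (Fin n → Bool) → (Fin n → Bool) → ℂ

/-- Hadamard `H^{⊗n}` on register `E₁`. -/
noncomputable def hadE1 {n : ℕ} (f : St n) : St n := fun x y z =>
  ((Real.sqrt 2 : ℂ)⁻¹) ^ n * ∑ y' : Fin n → Bool, (-1 : ℂ) ^ bdot y y' * f x y' z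

/-- `CZ_{E₁→B} = ∑_b σ_Z(b) ⊗ |b⟩⟨b| ⊗ I`. -/
def czE1B {n : ℕ} (f : St n) : St n := fun x y z => (-1 : ℂ) ^ bdot y x * f x y z

/-- `CX_{E₁→B} = ∑_c σ_X(c) ⊗ |c⟩⟨c| ⊗ I`. -/
def cxE1B {n : ℕ} (f : St n) : St n := fun x y z => f (bxor x y) y z

/-- `CNOT_{E₂→E₁} : |u⟩_{E₁}|v⟩_{E₂} ↦ |u+v⟩_{E₁}|v⟩_{E₂}`. -/
def cnotE2E1 {n : ℕ} (f : St n) : St n := fun x y z => f x (bxor y z) z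

/-- The honest swap-gadget unitary
`U_swap = CNOT_{E₂→E₁} ∘ CX_{E₁→B} ∘ (I ⊗ H^{⊗n} ⊗ I) ∘ CZ_{E₁→B} ∘ (I ⊗ H^{⊗n} ⊗ I)`. -/
noncomputable def uswap {n : ℕ} (f : St n) : St n :=
  cnotE2E1 (cxE1B (hadE1 (czE1B (hadE1 f))))

/-- The initial state `ψ_M ⊗ |Φ⁺_n⟩_{AB} ⊗ |Φ⁺_n⟩_{E₁E₂}` on the five
registers `M, A, B, E₁, E₂`. -/
noncomputable def initState {n : ℕ} (ψ : (Fin n → Bool) → ℂ) :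
    (Fin n → Bool) → (Fin n → Bool) → (Fin n → Bool) → (Fin n → Bool) →
      (Fin n → Bool) → ℂ :=
  fun m xA xB y z => ψ m * phiPlus n xA xB * phiPlus n y z

/-- `(⟨Φ_{a,b}|_{MA} ⊗ I_{BE₁E₂})` applied to the initial state. -/
noncomputable def contracted {n : ℕ} (ψ : (Fin n → Bool) → ℂ) (a b : Fin n → Bool) :
    St n := fun x y z =>
  ∑ u : Fin n → Bool, ∑ v : Fin n → Bool,
    (starRingEnd ℂ) (phiBell a b u v) * initState ψ u v x y z

/-- The Pauli correction `σ_Z(b)σ_X(a)` applied to register `E₁`. -/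
noncomputable def correct {n : ℕ} (a b : Fin n → Bool) (f : St n) : St n :=
  fun x y z => (-1 : ℂ) ^ bdot b y * f x (bxor y a) z

end Stmt14

namespace Stmt14

/-- abbreviation for the normalization constant -/
noncomputable def Sc (n : ℕ) : ℂ := ((Real.sqrt 2 : ℂ)⁻¹) ^ n

lemma bdot_comm {n : ℕ} (b c : Fin n → Bool) : bdot b c = bdot c b := by
  unfold bdot; congr 1; ext i; simp [and_comm]

lemma bxor_cancel {n : ℕ} (x a : Fin n → Bool) : bxor (bxor x a) a = x := by
  funext i; simp [bxor]

lemma bxor_eq_iff {n : ℕ} (u a x : Fin n → Bool) : bxor u a = x ↔ u = bxor x a :=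
  ⟨fun h => by rw [← h, bxor_cancel], fun h => by rw [h, bxor_cancel]⟩

lemma neg_one_pow_bdot_prod {n : ℕ} (b c : Fin n → Bool) :
    ((-1:ℂ))^(bdot b c) = ∏ i, (if b i && c i then (-1:ℂ) else 1) := by
  rw [Finset.prod_ite, Finset.prod_const, Finset.prod_const_one, mul_one, bdot]
  congr 2
  exact Finset.filter_congr fun i _ => by simp

lemma bdot_bxor {n : ℕ} (b u v : Fin n → Bool) :
    ((-1:ℂ))^(bdot b (bxor u v)) = (-1)^(bdot b u) * (-1)^(bdot b v) := by
  rw [neg_one_pow_bdot_prod, neg_one_pow_bdot_prod, neg_one_pow_bdot_prod,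
    ← Finset.prod_mul_distrib]
  refine Finset.prod_congr rfl fun i _ => ?_
  cases h1 : b i <;> cases h2 : u i <;> cases h3 : v i <;> simp [bxor, h1, h2, h3]

lemma sign_orth {n : ℕ} (d : Fin n → Bool) :
    ∑ c : Fin n → Bool, ((-1:ℂ))^(bdot d c)
      = if d = (fun _ => false) then (2:ℂ)^n else 0 := by
  have : ∑ c : Fin n → Bool, ((-1:ℂ))^(bdot d c)
      = ∏ i, ∑ x : Bool, (if d i && x then (-1:ℂ) else 1) := by
    rw [Fintype.prod_sum fun i x => (if d i && x then (-1:ℂ) else 1)]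
    exact Finset.sum_congr rfl fun c _ => neg_one_pow_bdot_prod d c
  rw [this]
  have h2 : ∀ i, (∑ x : Bool, (if d i && x then (-1:ℂ) else 1))
      = if d i then 0 else 2 := by
    intro i; cases h : d i
    · simp [h]
    · simp [h]
  simp only [h2]
  by_cases h : d = fun _ => false
  · simp [h]
  · rw [if_neg h]
    obtain ⟨i, hi⟩ : ∃ i, d i ≠ false := by
      by_contra hc; push_neg at hc; exact h (funext fun i => hc i)
    exact Finset.prod_eq_zero (Finset.mem_univ i) (by simp [Bool.ne_false_iff.mp hi])

lemma sign_combine {n : ℕ} (y x z y' : Fin n → Bool) :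
    (-1:ℂ)^(bdot y y') * ((-1:ℂ)^(bdot y' x) * (-1:ℂ)^(bdot y' z))
      = (-1:ℂ)^(bdot (bxor (bxor y x) z) y') := by
  rw [bdot_comm (bxor (bxor y x) z) y', bdot_bxor, bdot_bxor, bdot_comm y y']
  ring

lemma cond_iff {n : ℕ} (y x z : Fin n → Bool) :
    (bxor (bxor y x) z = fun _ => false) ↔ y = bxor x z := by
  simp only [funext_iff, bxor]
  refine forall_congr' fun i => ?_
  cases y i <;> cases x i <;> cases z i <;> decide

lemma condXZ {n : ℕ} (y x z : Fin n → Bool) :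
    (y = bxor (bxor x y) z) ↔ x = z := by
  simp only [funext_iff, bxor]
  refine forall_congr' fun i => ?_
  cases y i <;> cases x i <;> cases z i <;> decide

/-- The contracted state, closed form. -/
lemma contracted_eq {n : ℕ} (ψ : (Fin n → Bool) → ℂ) (a b : Fin n → Bool) :
    contracted ψ a b = fun x y z =>
      (-1:ℂ)^(bdot b (bxor x a)) * ψ (bxor x a) * (Sc n * Sc n)
        * (if y = z then Sc n else 0) := by
  funext x y z
  unfold contracted initState phiBell opZ opX phiPlus Sc
  simp only [map_mul, map_pow, map_neg, map_one, apply_ite, map_zero, map_inv₀,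
    Complex.conj_ofReal]
  simp only [mul_ite, ite_mul, mul_zero, zero_mul, Finset.sum_ite_eq,
    Finset.mem_univ, if_true]
  simp only [bxor_eq_iff, Finset.sum_ite_eq', Finset.mem_univ, if_true]
  by_cases hyz : y = z <;> simp [hyz] <;> ring

lemma st1 {n : ℕ} (ψ : (Fin n → Bool) → ℂ) (a b : Fin n → Bool) :
    hadE1 (contracted ψ a b) = fun x y z =>
      Sc n * Sc n * Sc n * Sc n *
        ((-1:ℂ)^(bdot y z) * ((-1:ℂ)^(bdot b (bxor x a)) * ψ (bxor x a))) := by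
  funext x y z
  rw [contracted_eq]
  show Sc n * _ = _
  simp only [mul_ite, ite_mul, mul_zero, zero_mul, Finset.sum_ite_eq',
    Finset.mem_univ, if_true]
  ring

lemma st2 {n : ℕ} (ψ : (Fin n → Bool) → ℂ) (a b : Fin n → Bool) :
    czE1B (hadE1 (contracted ψ a b)) = fun x y z =>
      Sc n * Sc n * Sc n * Sc n *
        ((-1:ℂ)^(bdot y x) * (-1:ℂ)^(bdot y z) *
          ((-1:ℂ)^(bdot b (bxor x a)) * ψ (bxor x a))) := by
  funext x y z
  show (-1:ℂ)^(bdot y x) * _ = _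
  rw [st1]
  ring

lemma st3 {n : ℕ} (ψ : (Fin n → Bool) → ℂ) (a b : Fin n → Bool) :
    hadE1 (czE1B (hadE1 (contracted ψ a b))) = fun x y z =>
      if y = bxor x z then
        Sc n * Sc n * Sc n * Sc n * Sc n * (2:ℂ)^n *
          ((-1:ℂ)^(bdot b (bxor x a)) * ψ (bxor x a))
      else 0 := by
  funext x y z
  rw [st2]
  show Sc n * ∑ y' : Fin n → Bool, (-1:ℂ)^(bdot y y') *
      (Sc n * Sc n * Sc n * Sc n *
        ((-1:ℂ)^(bdot y' x) * (-1:ℂ)^(bdot y' z) *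
          ((-1:ℂ)^(bdot b (bxor x a)) * ψ (bxor x a)))) = _
  have key : ∀ y' : Fin n → Bool,
      (-1:ℂ)^(bdot y y') *
        (Sc n * Sc n * Sc n * Sc n *
          ((-1:ℂ)^(bdot y' x) * (-1:ℂ)^(bdot y' z) *
            ((-1:ℂ)^(bdot b (bxor x a)) * ψ (bxor x a))))
      = (Sc n * Sc n * Sc n * Sc n *
          ((-1:ℂ)^(bdot b (bxor x a)) * ψ (bxor x a))) *
          (-1:ℂ)^(bdot (bxor (bxor y x) z) y') := by
    intro y'
    rw [← sign_combine y x z y']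
    ring
  rw [Finset.sum_congr rfl fun y' _ => key y', ← Finset.mul_sum, sign_orth]
  simp only [cond_iff]
  by_cases h : y = bxor x z <;> simp [h] <;> ring

lemma st5 {n : ℕ} (ψ : (Fin n → Bool) → ℂ) (a b : Fin n → Bool) :
    uswap (contracted ψ a b) = fun x y z =>
      if x = z then
        Sc n * Sc n * Sc n * Sc n * Sc n * (2:ℂ)^n *
          ((-1:ℂ)^(bdot b (bxor (bxor x (bxor y z)) a)) * ψ (bxor (bxor x (bxor y z)) a))
      else 0 := by
  funext x y z
  show hadE1 (czE1B (hadE1 (contracted ψ a b))) (bxor x (bxor y z)) (bxor y z) z = _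
  rw [st3]
  simp only [condXZ]

lemma pow_half (n : ℕ) : Sc n * Sc n = ((2:ℂ)^n)⁻¹ := by
  unfold Sc
  rw [← mul_pow, ← mul_inv, ← Complex.ofReal_mul,
    Real.mul_self_sqrt (by norm_num), inv_pow]
  norm_num

lemma const_id (n : ℕ) :
    Sc n * Sc n * Sc n * Sc n * Sc n * (2:ℂ)^n = ((2:ℂ)^n)⁻¹ * Sc n := by
  have h2n : ((2:ℂ)^n) ≠ 0 := pow_ne_zero n two_ne_zero
  have h := pow_half n
  calc Sc n * Sc n * Sc n * Sc n * Sc n * (2:ℂ)^n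
      = (Sc n * Sc n) * (Sc n * Sc n) * Sc n * (2:ℂ)^n := by ring
    _ = ((2:ℂ)^n)⁻¹ * (((2:ℂ)^n)⁻¹ * (2:ℂ)^n) * Sc n := by rw [h]; ring
    _ = ((2:ℂ)^n)⁻¹ * Sc n := by rw [inv_mul_cancel₀ h2n]; ring

lemma bxor_self_mid {n : ℕ} (x w : Fin n → Bool) : bxor x (bxor w x) = w := by
  funext i
  show xor (x i) (xor (w i) (x i)) = w i
  cases x i <;> cases w i <;> rfl

end Stmt14

open Stmt14 in
/-- `(I_B ⊗ σ_Z(b)σ_X(a)_{E₁} ⊗ I_{E₂}) · U_swap ·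
(⟨Φ_{a,b}|_{MA} ⊗ I)(ψ_M ⊗ |Φ⁺_n⟩_{AB} ⊗ |Φ⁺_n⟩_{E₁E₂})
= 2^{−n} · 2^{−n/2} ∑_c |c⟩_B ⊗ ψ_{E₁} ⊗ |c⟩_{E₂}`: up to normalization
`2^{−n}` the extractor ends with `|Φ⁺_n⟩` on `(B, E₂)` and exactly `ψ` in its
output register `E₁`. -/
theorem stmt_14 (n : ℕ) (hn : 1 ≤ n) (ψ : (Fin n → Bool) → ℂ) (a b : Fin n → Bool) :
    correct a b (uswap (contracted ψ a b)) = fun x y z =>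
      ((2 : ℂ) ^ n)⁻¹ * (((Real.sqrt 2 : ℂ)⁻¹) ^ n * (if x = z then ψ y else 0)) := by
  funext x y z
  show (-1:ℂ)^(bdot b y) * uswap (contracted ψ a b) x (bxor y a) z = _
  rw [st5]
  beta_reduce
  by_cases hxz : x = z
  · subst hxz
    rw [if_pos rfl, if_pos rfl]
    have harg : bxor (bxor x (bxor (bxor y a) x)) a = y := by
      rw [bxor_self_mid, bxor_cancel]
    rw [harg, const_id]
    have hsq : (-1:ℂ)^(bdot b y) * (-1:ℂ)^(bdot b y) = 1 := by
      rw [← mul_pow]; norm_num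
    show (-1:ℂ)^(bdot b y) * (((2:ℂ)^n)⁻¹ * Sc n * ((-1:ℂ)^(bdot b y) * ψ y))
        = ((2:ℂ)^n)⁻¹ * (Sc n * ψ y)
    linear_combination ((2:ℂ)^n)⁻¹ * Sc n * ψ y * hsq
  · simp [hxz]
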